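/- arXiv:1311.0128 — 3 statements merged into one kernel-verified Lean document; each statement's English description precedes it below -/
import Mathlib

section
/- Let λ, c > 0. Define q : ℝ × (0,∞) → ℝ on the open cone {(x,t) : |x| < ct, t > 0} by q(x,t) = I₀((λ/c)√(c²t² − x²)). Then q satisfies the one-dimensional Klein–Gordon equation ∂²q/∂t² − λ² q = c² ∂²q/∂x² on the open cone. -/
/-!
With `G(u) = ∑ uᵏ/(k!)²` one has `I₀(x) = G(x²/4)`, so on the cone `q = G(β w)` with
`w = c²t² - x²` and `β = λ²/(4c²)`. Differentiating the entire series termwise gives Bessel's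
equation in the form `u G'' + G' = G`, and the chain rule turns
`q_tt - c² q_xx = 4β²c² w G''(β w) + 4βc² G'(β w)` into `4βc² G(β w) = λ² q`.
-/

open Real

/-- The modified Bessel function of order zero,
`I₀(x) = Σ_{k=0}^∞ (x/2)^{2k} / (k!)²`. -/
noncomputable def besselI0 (x : ℝ) : ℝ :=
  ∑' k : ℕ, (x / 2) ^ (2 * k) / ((k.factorial : ℝ)) ^ 2

open Topology

noncomputable def powerSeriesSum (a : ℕ → ℝ) (u : ℝ) : ℝ := ∑' k, a k * u ^ k

def derivCoeff (a : ℕ → ℝ) (k : ℕ) : ℝ := (k + 1) * a (k + 1)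

section EntireSeries

variable {a : ℕ → ℝ} (ha : ∀ r : ℝ, Summable fun k => |a k| * r ^ k)
include ha

lemma summable_mul_pow (u : ℝ) : Summable fun k => a k * u ^ k :=
  (ha |u|).of_norm_bounded fun k => by rw [norm_mul, norm_pow, Real.norm_eq_abs, Real.norm_eq_abs]

lemma summable_abs_natCast_mul_mul_pow (r : ℝ) :
    Summable fun k : ℕ => |(k : ℝ) * a k| * r ^ k := by
  refine (ha (2 * |r|)).of_norm_bounded fun k => ?_
  have hk : (k : ℝ) ≤ 2 ^ k := by exact_mod_cast Nat.lt_two_pow_self.le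
  calc ‖|(k : ℝ) * a k| * r ^ k‖ = |a k| * ((k : ℝ) * |r| ^ k) := by
        simp only [norm_mul, norm_pow, Real.norm_eq_abs, abs_abs, abs_mul, Nat.abs_cast]; ring
    _ ≤ |a k| * (2 ^ k * |r| ^ k) := by gcongr
    _ = |a k| * (2 * |r|) ^ k := by rw [mul_pow]

lemma summable_abs_derivCoeff_mul_pow (r : ℝ) :
    Summable fun k => |derivCoeff a k| * r ^ k := by
  have hsucc := (summable_nat_add_iff 1).mpr (summable_abs_natCast_mul_mul_pow ha (|r| + 1))
  refine hsucc.of_norm_bounded fun k => ?_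
  calc ‖|derivCoeff a k| * r ^ k‖ = |derivCoeff a k| * |r| ^ k := by
        simp only [norm_mul, norm_pow, Real.norm_eq_abs, abs_abs]
    _ ≤ |derivCoeff a k| * (|r| + 1) ^ (k + 1) := by
        gcongr
        calc |r| ^ k ≤ (|r| + 1) ^ k := by gcongr; linarith
          _ ≤ (|r| + 1) ^ (k + 1) := pow_le_pow_right₀ (by linarith [abs_nonneg r]) k.le_succ
    _ = |((k + 1 : ℕ) : ℝ) * a (k + 1)| * (|r| + 1) ^ (k + 1) := by
        rw [derivCoeff]; push_cast; ring

lemma hasDerivAt_powerSeriesSum (u : ℝ) :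
    HasDerivAt (powerSeriesSum a) (powerSeriesSum (derivCoeff a) u) u := by
  set R := |u| + 1
  have hR : 1 ≤ R := by linarith [abs_nonneg u]
  have hbound : ∀ (k : ℕ) (y : ℝ), |y| ≤ R →
      ‖a k * (k * y ^ (k - 1))‖ ≤ |(k : ℝ) * a k| * R ^ k :=
    fun k y hy => calc
      ‖a k * (k * y ^ (k - 1))‖ = |(k : ℝ) * a k| * |y| ^ (k - 1) := by
        simp only [norm_mul, norm_pow, Real.norm_eq_abs, abs_mul, Nat.abs_cast]; ring
      _ ≤ |(k : ℝ) * a k| * R ^ k := by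
        gcongr
        exact (pow_le_pow_left₀ (abs_nonneg y) hy _).trans (pow_le_pow_right₀ hR (k.sub_le 1))
  have hmem : u ∈ Metric.ball (0 : ℝ) R := by simp [R]
  have hderiv := hasDerivAt_tsum_of_isPreconnected (summable_abs_natCast_mul_mul_pow ha R)
    Metric.isOpen_ball (convex_ball (0 : ℝ) R).isPreconnected
    (fun (k : ℕ) y _ => (hasDerivAt_pow k y).const_mul (a k))
    (fun (k : ℕ) y hy => hbound k y (by simpa using (Metric.mem_ball.mp hy).le)) hmem
    (summable_mul_pow ha u) hmem
  have hshift : ∑' k : ℕ, a k * (k * u ^ (k - 1)) = powerSeriesSum (derivCoeff a) u := by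
    rw [((summable_abs_natCast_mul_mul_pow ha R).of_norm_bounded
      fun k => hbound k u (le_of_lt (by simpa using hmem))).tsum_eq_zero_add]
    simp only [CharP.cast_eq_zero, zero_tsub, pow_zero, mul_one, mul_zero, Nat.cast_add,
      Nat.cast_one, add_tsub_cancel_right, mul_comm, mul_left_comm, zero_add, powerSeriesSum,
      derivCoeff]
  exact hshift ▸ hderiv

lemma mul_powerSeriesSum_derivCoeff (u : ℝ) :
    u * powerSeriesSum (derivCoeff a) u = ∑' k : ℕ, (k : ℝ) * a k * u ^ k := by
  rw [(summable_mul_pow (summable_abs_natCast_mul_mul_pow ha) u).tsum_eq_zero_add,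
    powerSeriesSum, ← tsum_mul_left]
  simp only [derivCoeff, CharP.cast_eq_zero, zero_mul, pow_zero, mul_one, Nat.cast_add,
    Nat.cast_one, pow_succ, zero_add]
  exact tsum_congr fun k => by ring

end EntireSeries

noncomputable def besselCoeff (k : ℕ) : ℝ := ((k.factorial : ℝ) ^ 2)⁻¹

lemma summable_abs_besselCoeff_mul_pow (r : ℝ) :
    Summable fun k => |besselCoeff k| * r ^ k := by
  refine (Real.summable_pow_div_factorial |r|).of_norm_bounded fun k => ?_
  have hfac : (1 : ℝ) ≤ k.factorial := by exact_mod_cast k.factorial_pos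
  rw [norm_mul, norm_pow, Real.norm_eq_abs, Real.norm_eq_abs, abs_abs, besselCoeff,
    abs_of_pos (by positivity), inv_mul_eq_div]
  gcongr
  nlinarith

lemma natCast_add_one_mul_derivCoeff_besselCoeff (k : ℕ) :
    ((k : ℝ) + 1) * derivCoeff besselCoeff k = besselCoeff k := by
  simp only [derivCoeff, besselCoeff, Nat.factorial_succ]
  push_cast
  field_simp

lemma besselI0_eq_powerSeriesSum (x : ℝ) :
    besselI0 x = powerSeriesSum besselCoeff ((x / 2) ^ 2) :=
  tsum_congr fun k => by rw [pow_mul, besselCoeff, inv_mul_eq_div, div_eq_mul_inv]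

lemma powerSeriesSum_besselCoeff_ode (u : ℝ) :
    u * powerSeriesSum (derivCoeff (derivCoeff besselCoeff)) u
      + powerSeriesSum (derivCoeff besselCoeff) u = powerSeriesSum besselCoeff u := by
  have hd := summable_abs_derivCoeff_mul_pow summable_abs_besselCoeff_mul_pow
  rw [mul_powerSeriesSum_derivCoeff hd, powerSeriesSum, powerSeriesSum,
    ← (summable_mul_pow (summable_abs_natCast_mul_mul_pow hd) u).tsum_add (summable_mul_pow hd u)]
  exact tsum_congr fun k => by
    rw [← natCast_add_one_mul_derivCoeff_besselCoeff]; ring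

section SecondDerivative

variable {G G' G'' g g' g'' : ℝ → ℝ} (hG : ∀ u, HasDerivAt G (G' u) u)
  (hG' : ∀ u, HasDerivAt G' (G'' u) u)

include hG hG'

lemma iteratedDeriv_two_comp (hg : ∀ x, HasDerivAt g (g' x) x)
    (hg' : ∀ x, HasDerivAt g' (g'' x) x) (x : ℝ) :
    iteratedDeriv 2 (fun y => G (g y)) x = G'' (g x) * g' x ^ 2 + G' (g x) * g'' x := by
  have hd : deriv (fun y => G (g y)) = fun y => G' (g y) * g' y :=
    funext fun y => ((hG (g y)).comp y (hg y)).deriv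
  rw [iteratedDeriv_succ, iteratedDeriv_one, hd]
  exact (((hG' (g x)).comp x (hg x)).mul (hg' x)).deriv.trans (by rw [Function.comp_apply]; ring)

lemma iteratedDeriv_two_sub_mul_iteratedDeriv_two_of_ode
    (hode : ∀ u, u * G'' u + G' u = G u) (β c x t : ℝ) :
    iteratedDeriv 2 (fun s => G (β * (c ^ 2 * s ^ 2 - x ^ 2))) t
        - c ^ 2 * iteratedDeriv 2 (fun y => G (β * (c ^ 2 * t ^ 2 - y ^ 2))) x
      = 4 * β * c ^ 2 * G (β * (c ^ 2 * t ^ 2 - x ^ 2)) := by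
  have hquad : ∀ p q s : ℝ,
      HasDerivAt (fun s => β * (p * s ^ 2 + q)) (2 * β * p * s) s :=
    fun p q s => by
      simpa [mul_comm, mul_left_comm, mul_assoc] using
        (((hasDerivAt_pow 2 s).const_mul p).add_const q).const_mul β
  have hlin : ∀ p s : ℝ, HasDerivAt (fun s => 2 * β * p * s) (2 * β * p) s :=
    fun p s => by simpa using (hasDerivAt_id s).const_mul (2 * β * p)
  have ht := iteratedDeriv_two_comp hG hG' (hquad (c ^ 2) (-x ^ 2)) (hlin (c ^ 2)) t
  have hx := iteratedDeriv_two_comp hG hG' (hquad (-1) (c ^ 2 * t ^ 2)) (hlin (-1)) x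
  simp only [← sub_eq_add_neg, neg_one_mul, ← sub_eq_neg_add] at ht hx
  rw [ht, hx, ← hode]
  ring

end SecondDerivative

theorem statement16_general (lam c : ℝ)
    (q : ℝ → ℝ → ℝ)
    (hq : ∀ x t : ℝ, q x t =
      besselI0 (lam / c * Real.sqrt (c ^ 2 * t ^ 2 - x ^ 2))) :
    ∀ x t : ℝ, 0 < t → |x| < c * t →
      iteratedDeriv 2 (fun s => q x s) t - lam ^ 2 * q x t
        = c ^ 2 * iteratedDeriv 2 (fun s => q s t) x := by
  intro x t _ hxt
  set β := (lam / c / 2) ^ 2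
  set G := powerSeriesSum besselCoeff
  have hq_cone : ∀ y s, 0 < c ^ 2 * s ^ 2 - y ^ 2 → q y s = G (β * (c ^ 2 * s ^ 2 - y ^ 2)) :=
    fun y s h => by
      rw [hq, besselI0_eq_powerSeriesSum, div_pow, mul_pow, sq_sqrt h.le]
      exact congrArg G (by ring)
  have hcone : 0 < c ^ 2 * t ^ 2 - x ^ 2 := by nlinarith [abs_nonneg x, sq_abs x]
  have hc : c ≠ 0 := by rintro rfl; linarith [abs_nonneg x]
  have ht : (fun s => q x s) =ᶠ[𝓝 t] fun s => G (β * (c ^ 2 * s ^ 2 - x ^ 2)) := by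
    have hcont : Continuous fun s : ℝ => c ^ 2 * s ^ 2 - x ^ 2 := by fun_prop
    exact (continuousAt_const.eventually_lt hcont.continuousAt hcone).mono fun s => hq_cone x s
  have hx : (fun y => q y t) =ᶠ[𝓝 x] fun y => G (β * (c ^ 2 * t ^ 2 - y ^ 2)) := by
    have hcont : Continuous fun y : ℝ => c ^ 2 * t ^ 2 - y ^ 2 := by fun_prop
    exact (continuousAt_const.eventually_lt hcont.continuousAt hcone).mono fun y => hq_cone y t
  have hentire := summable_abs_besselCoeff_mul_pow
  have hKG := iteratedDeriv_two_sub_mul_iteratedDeriv_two_of_ode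
    (hasDerivAt_powerSeriesSum hentire)
    (hasDerivAt_powerSeriesSum (summable_abs_derivCoeff_mul_pow hentire))
    powerSeriesSum_besselCoeff_ode β c x t
  have hβ : 4 * β * c ^ 2 = lam ^ 2 := by simp only [β]; field_simp; ring
  rw [ht.iteratedDeriv_eq, hx.iteratedDeriv_eq, hq_cone x t hcone]
  linear_combination hKG + G (β * (c ^ 2 * t ^ 2 - x ^ 2)) * hβ

/-- `q(x,t) = I₀((λ/c)√(c²t² - x²))` satisfies the one-dimensional
Klein–Gordon equation `∂²q/∂t² - λ²q = c² ∂²q/∂x²` on the open cone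
`{(x,t) : |x| < ct, t > 0}`. -/
theorem statement16 (lam c : ℝ) (hlam : 0 < lam) (hc : 0 < c)
    (q : ℝ → ℝ → ℝ)
    (hq : ∀ x t : ℝ, q x t =
      besselI0 (lam / c * Real.sqrt (c ^ 2 * t ^ 2 - x ^ 2))) :
    ∀ x t : ℝ, 0 < t → |x| < c * t →
      iteratedDeriv 2 (fun s => q x s) t - lam ^ 2 * q x t
        = c ^ 2 * iteratedDeriv 2 (fun s => q s t) x :=
  statement16_general lam c q hq
end

section
/- Let λ, c > 0. Define p : ℝ² × (0,∞) → ℝ on the open cone {(y₁,y₂,t) : y₁² + y₂² < c²t², t > 0} by p(y₁,y₂,t) = λ e^{(λ/c)√(c²t² − y₁² − y₂²)} / ( 2πc (e^{λt} − 1) √(c²t² − y₁² − y₂²) ). Then p satisfies the two-dimensional time-varying telegraph-type equation ∂²p/∂t² + c₁(t) ∂p/∂t − c² ( ∂²p/∂y₁² + ∂²p/∂y₂² ) − c₂(t) p = 0 on the open cone, where c₁(t) = 2λ e^{λt}/(e^{λt} − 1) and c₂(t) = −λ²/(e^{λt} − 1). -/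
/-!
Write `p = F(t) ψ(u)` with `u = c²t² - y₁² - y₂²`, `ψ(u) = e^{a√u}/√u`, `a = λ/c`, and
`F(t) = k f(t)`, `f(t) = 1/(e^{λt} - 1)`. For any such product the telegraph operator equals
`4c²F (uψ'' + 3/2 ψ') + (F'' + c₁F' - c₂F) ψ + 2c²t (2F' + c₁F) ψ'`.
The profile solves `uψ'' + 3/2 ψ' = a²/4 ψ` (it is `e^{ar}/r`, `r = √u`), so the first term is
`λ²Fψ`. Since `f' = -λ f(1 + f)` and `c₁ = 2λ(1 + f)`, `c₂ = -λ² f`, the coefficient `2F' + c₁F`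
vanishes and `F'' + c₁F' - c₂F = -λ²F`, which cancels the first term.
-/

open Real Filter Topology

theorem iteratedDeriv_two_eq_of_hasDerivAt {𝕜 F : Type*} [NontriviallyNormedField 𝕜]
    [NormedAddCommGroup F] [NormedSpace 𝕜 F] {f f' : 𝕜 → F} {f'' : F} {x : 𝕜}
    (hf : ∀ᶠ y in 𝓝 x, HasDerivAt f (f' y) y) (hf' : HasDerivAt f' f'' x) :
    iteratedDeriv 2 f x = f'' := by
  have hderiv : deriv f =ᶠ[𝓝 x] f' := hf.mono fun y hy => hy.deriv
  rw [iteratedDeriv_succ, iteratedDeriv_one, hderiv.deriv_eq, hf'.deriv]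

section QuadraticSubstitution

variable {F F' h h' : ℝ → ℝ} {F'' h'' α β x u : ℝ}

theorem hasDerivAt_quadratic (α β x : ℝ) :
    HasDerivAt (fun s => α * s ^ 2 + β) (2 * α * x) x := by
  simpa [mul_comm, mul_assoc, mul_left_comm] using ((hasDerivAt_pow 2 x).const_mul α).add_const β

theorem hasDerivAt_mul_comp_quadratic {F₁ h₁ : ℝ} (hq : α * x ^ 2 + β = u)
    (hF : HasDerivAt F F₁ x) (hh : HasDerivAt h h₁ u) :
    HasDerivAt (fun s => F s * h (α * s ^ 2 + β)) (F₁ * h u + F x * (h₁ * (2 * α * x))) x := by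
  subst hq
  exact hF.mul (hh.comp x (hasDerivAt_quadratic α β x))

theorem iteratedDeriv_two_mul_comp_quadratic (hq : α * x ^ 2 + β = u)
    (hF : ∀ᶠ s in 𝓝 x, HasDerivAt F (F' s) s) (hF' : HasDerivAt F' F'' x)
    (hh : ∀ᶠ v in 𝓝 u, HasDerivAt h (h' v) v) (hh' : HasDerivAt h' h'' u) :
    iteratedDeriv 2 (fun s => F s * h (α * s ^ 2 + β)) x
      = F'' * h u + 2 * F' x * (h' u * (2 * α * x))
        + F x * (h'' * (2 * α * x) ^ 2 + h' u * (2 * α)) := by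
  subst hq
  have hq' := hasDerivAt_quadratic α β x
  refine iteratedDeriv_two_eq_of_hasDerivAt
    (f' := fun s => F' s * h (α * s ^ 2 + β) + F s * (h' (α * s ^ 2 + β) * (2 * α * s))) ?_ ?_
  · filter_upwards [hF, hq'.continuousAt.tendsto.eventually hh] with s hFs hhs
    exact hasDerivAt_mul_comp_quadratic rfl hFs hhs
  · have hlin : HasDerivAt (fun s => 2 * α * s) (2 * α) x := by
      simpa using (hasDerivAt_id x).const_mul (2 * α)
    refine ((hF'.mul (hh.self_of_nhds.comp x hq')).add
      (hF.self_of_nhds.mul ((hh'.comp x hq').fun_mul hlin))).congr_deriv ?_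
    simp only [Function.comp_apply]
    ring

end QuadraticSubstitution

noncomputable def expSqrtDivSqrt (a u : ℝ) : ℝ := exp (a * √u) / √u

noncomputable def expSqrtDivSqrtDeriv (a u : ℝ) : ℝ := exp (a * √u) * (a * √u - 1) / (2 * √u ^ 3)

noncomputable def expSqrtDivSqrtDeriv2 (a u : ℝ) : ℝ :=
  exp (a * √u) * (a ^ 2 * √u ^ 2 - 3 * a * √u + 3) / (4 * √u ^ 5)

section ExpSqrtDivSqrt

variable (a : ℝ) {u : ℝ}

theorem hasDerivAt_expSqrtDivSqrt (hu : 0 < u) :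
    HasDerivAt (expSqrtDivSqrt a) (expSqrtDivSqrtDeriv a u) u := by
  have hr : √u ≠ 0 := (sqrt_pos.2 hu).ne'
  have hsqrt := hasDerivAt_sqrt hu.ne'
  refine (((hsqrt.const_mul a).exp).div hsqrt hr).congr_deriv ?_
  unfold expSqrtDivSqrtDeriv
  field_simp

theorem hasDerivAt_expSqrtDivSqrtDeriv (hu : 0 < u) :
    HasDerivAt (expSqrtDivSqrtDeriv a) (expSqrtDivSqrtDeriv2 a u) u := by
  have hr : √u ≠ 0 := (sqrt_pos.2 hu).ne'
  have hsqrt := hasDerivAt_sqrt hu.ne'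
  refine ((((hsqrt.const_mul a).exp).fun_mul ((hsqrt.const_mul a).sub_const 1)).div
    ((hsqrt.fun_pow 3).const_mul 2) (mul_ne_zero two_ne_zero (pow_ne_zero 3 hr))).congr_deriv ?_
  unfold expSqrtDivSqrtDeriv2
  field_simp
  ring

/-- In `r = √u` this is `(r f)'' = a² (r f)` for `f r = e^{a r} / r`. -/
theorem expSqrtDivSqrt_ode (hu : 0 < u) :
    u * expSqrtDivSqrtDeriv2 a u + 3 / 2 * expSqrtDivSqrtDeriv a u
      = a ^ 2 / 4 * expSqrtDivSqrt a u := by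
  have hr : √u ≠ 0 := (sqrt_pos.2 hu).ne'
  unfold expSqrtDivSqrt expSqrtDivSqrtDeriv expSqrtDivSqrtDeriv2
  nth_rewrite 1 [← sq_sqrt hu.le]
  field_simp
  ring

end ExpSqrtDivSqrt

noncomputable def invExpSubOne (l s : ℝ) : ℝ := (exp (l * s) - 1)⁻¹

section InvExpSubOne

variable {l s : ℝ}

theorem exp_mul_sub_one_ne_zero (hs : l * s ≠ 0) : exp (l * s) - 1 ≠ 0 :=
  sub_ne_zero.2 (mt (exp_eq_one_iff _).1 hs)

theorem one_add_invExpSubOne (hs : l * s ≠ 0) :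
    1 + invExpSubOne l s = exp (l * s) / (exp (l * s) - 1) := by
  have hne := exp_mul_sub_one_ne_zero hs
  unfold invExpSubOne
  field_simp
  ring

theorem hasDerivAt_invExpSubOne (hs : l * s ≠ 0) :
    HasDerivAt (invExpSubOne l) (-l * (invExpSubOne l s * (1 + invExpSubOne l s))) s := by
  have hexp : HasDerivAt (fun s => exp (l * s) - 1) (exp (l * s) * l) s := by
    simpa using (((hasDerivAt_id s).const_mul l).exp).sub_const 1
  refine (hexp.inv (exp_mul_sub_one_ne_zero hs)).congr_deriv ?_
  rw [one_add_invExpSubOne hs]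
  unfold invExpSubOne
  field_simp

theorem hasDerivAt_invExpSubOne_deriv (hs : l * s ≠ 0) :
    HasDerivAt (fun s => -l * (invExpSubOne l s * (1 + invExpSubOne l s)))
      (l ^ 2 * (invExpSubOne l s * (1 + invExpSubOne l s) * (1 + 2 * invExpSubOne l s))) s := by
  have hf := hasDerivAt_invExpSubOne hs
  refine ((hf.mul (hf.const_add 1)).const_mul (-l)).congr_deriv ?_
  ring

end InvExpSubOne

noncomputable def telegraphOp (c c₁ c₂ : ℝ) (p : ℝ → ℝ → ℝ → ℝ) (y₁ y₂ t : ℝ) : ℝ :=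
  iteratedDeriv 2 (fun s => p y₁ y₂ s) t + c₁ * deriv (fun s => p y₁ y₂ s) t
    - c ^ 2 * (iteratedDeriv 2 (fun s => p s y₂ t) y₁ + iteratedDeriv 2 (fun s => p y₁ s t) y₂)
    - c₂ * p y₁ y₂ t

theorem telegraphOp_mul_comp_interval {p : ℝ → ℝ → ℝ → ℝ} {F F' h h' : ℝ → ℝ} {F'' h'' u : ℝ}
    (c c₁ c₂ : ℝ) {y₁ y₂ t : ℝ}
    (hp : ∀ y₁ y₂ s, p y₁ y₂ s = F s * h (c ^ 2 * s ^ 2 - y₁ ^ 2 - y₂ ^ 2))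
    (hu : c ^ 2 * t ^ 2 - y₁ ^ 2 - y₂ ^ 2 = u)
    (hF : ∀ᶠ s in 𝓝 t, HasDerivAt F (F' s) s) (hF' : HasDerivAt F' F'' t)
    (hh : ∀ᶠ v in 𝓝 u, HasDerivAt h (h' v) v) (hh' : HasDerivAt h' h'' u) :
    telegraphOp c c₁ c₂ p y₁ y₂ t
      = 4 * c ^ 2 * F t * (u * h'' + 3 / 2 * h' u) + (F'' + c₁ * F' t - c₂ * F t) * h u
        + 2 * c ^ 2 * t * (2 * F' t + c₁ * F t) * h' u := by
  obtain rfl : p = fun y₁ y₂ s => F s * h (c ^ 2 * s ^ 2 - y₁ ^ 2 - y₂ ^ 2) := by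
    funext y₁ y₂ s; exact hp y₁ y₂ s
  have hconst (y : ℝ) : ∀ᶠ s in 𝓝 y, HasDerivAt (fun _ => F t) 0 s :=
    Eventually.of_forall fun s => hasDerivAt_const s _
  have htime : (fun s => F s * h (c ^ 2 * s ^ 2 - y₁ ^ 2 - y₂ ^ 2))
      = fun s => F s * h (c ^ 2 * s ^ 2 + (-y₁ ^ 2 - y₂ ^ 2)) := by
    funext s; ring_nf
  have hspace₁ : (fun s => F t * h (c ^ 2 * t ^ 2 - s ^ 2 - y₂ ^ 2))
      = fun s => F t * h (-1 * s ^ 2 + (c ^ 2 * t ^ 2 - y₂ ^ 2)) := by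
    funext s; ring_nf
  have hspace₂ : (fun s => F t * h (c ^ 2 * t ^ 2 - y₁ ^ 2 - s ^ 2))
      = fun s => F t * h (-1 * s ^ 2 + (c ^ 2 * t ^ 2 - y₁ ^ 2)) := by
    funext s; ring_nf
  simp only [telegraphOp]
  rw [htime, hspace₁, hspace₂,
    iteratedDeriv_two_mul_comp_quadratic (x := t) (by rw [← hu]; ring) hF hF' hh hh',
    (hasDerivAt_mul_comp_quadratic (x := t) (by rw [← hu]; ring) hF.self_of_nhds
      hh.self_of_nhds).deriv,
    iteratedDeriv_two_mul_comp_quadratic (x := y₁) (by rw [← hu]; ring) (hconst y₁)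
      (hasDerivAt_const _ _) hh hh',
    iteratedDeriv_two_mul_comp_quadratic (x := y₂) (by rw [← hu]; ring) (hconst y₂)
      (hasDerivAt_const _ _) hh hh', ← hu]
  ring

/-- the law of the projection `(Y₁(t), Y₂(t))` onto the plane of
the three-dimensional random flight `Y₃(t)`,
`p(y₁,y₂,t) = λ e^{(λ/c)√(c²t²-y₁²-y₂²)} / (2πc(e^{λt}-1)√(c²t²-y₁²-y₂²))`,
satisfies the two-dimensional time-varying telegraph-type equation
`∂²p/∂t² + c₁(t) ∂p/∂t - c²(∂²p/∂y₁² + ∂²p/∂y₂²) - c₂(t) p = 0` on the open cone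
`{(y₁,y₂,t) : y₁² + y₂² < c²t², t > 0}`, where `c₁(t) = 2λe^{λt}/(e^{λt}-1)` and
`c₂(t) = -λ²/(e^{λt}-1)`. -/
theorem statement18 (lam c : ℝ) (hlam : 0 < lam) (hc : 0 < c)
    (p : ℝ → ℝ → ℝ → ℝ)
    (hp : ∀ y₁ y₂ t : ℝ, p y₁ y₂ t =
      lam * Real.exp (lam / c * Real.sqrt (c ^ 2 * t ^ 2 - y₁ ^ 2 - y₂ ^ 2)) /
        (2 * π * c * (Real.exp (lam * t) - 1) *
          Real.sqrt (c ^ 2 * t ^ 2 - y₁ ^ 2 - y₂ ^ 2))) :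
    ∀ y₁ y₂ t : ℝ, 0 < t → y₁ ^ 2 + y₂ ^ 2 < c ^ 2 * t ^ 2 →
      iteratedDeriv 2 (fun s => p y₁ y₂ s) t
        + (2 * lam * Real.exp (lam * t) / (Real.exp (lam * t) - 1)) *
            deriv (fun s => p y₁ y₂ s) t
        - c ^ 2 * (iteratedDeriv 2 (fun s => p s y₂ t) y₁
            + iteratedDeriv 2 (fun s => p y₁ s t) y₂)
        - (-(lam ^ 2) / (Real.exp (lam * t) - 1)) * p y₁ y₂ t = 0 := by
  intro y₁ y₂ t ht hcone
  set k := lam / (2 * π * c)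
  set a := lam / c
  have hp' (y₁ y₂ s : ℝ) : p y₁ y₂ s
      = k * invExpSubOne lam s * expSqrtDivSqrt a (c ^ 2 * s ^ 2 - y₁ ^ 2 - y₂ ^ 2) := by
    simp only [hp, k, invExpSubOne, expSqrtDivSqrt, div_eq_mul_inv, mul_inv]
    ring
  have hu : 0 < c ^ 2 * t ^ 2 - y₁ ^ 2 - y₂ ^ 2 := by linarith
  have hlt : lam * t ≠ 0 := mul_ne_zero hlam.ne' ht.ne'
  have hF : ∀ᶠ s in 𝓝 t, HasDerivAt (fun s => k * invExpSubOne lam s)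
      (k * (-lam * (invExpSubOne lam s * (1 + invExpSubOne lam s)))) s := by
    filter_upwards [eventually_ne_nhds ht.ne'] with s hs
    exact (hasDerivAt_invExpSubOne (mul_ne_zero hlam.ne' hs)).const_mul k
  have hψ := (eventually_gt_nhds hu).mono fun v hv => hasDerivAt_expSqrtDivSqrt a hv
  change telegraphOp c _ _ p y₁ y₂ t = 0
  rw [telegraphOp_mul_comp_interval c _ _ hp' rfl hF
    ((hasDerivAt_invExpSubOne_deriv hlt).const_mul k) hψ (hasDerivAt_expSqrtDivSqrtDeriv a hu)]
  have hc₁ : 2 * lam * exp (lam * t) / (exp (lam * t) - 1)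
      = 2 * lam * (1 + invExpSubOne lam t) := by
    rw [one_add_invExpSubOne hlt]; ring
  have hc₂ : -lam ^ 2 / (exp (lam * t) - 1) = -lam ^ 2 * invExpSubOne lam t := div_eq_mul_inv _ _
  have hca : c * a = lam := mul_div_cancel₀ lam hc.ne'
  rw [hc₁, hc₂]
  linear_combination (4 * c ^ 2 * k * invExpSubOne lam t) * expSqrtDivSqrt_ode a hu
    + k * invExpSubOne lam t * expSqrtDivSqrt a (c ^ 2 * t ^ 2 - y₁ ^ 2 - y₂ ^ 2) * (c * a + lam)
      * hca
end

section
/- Let λ, c > 0, t > 0, and let y₁ ∈ ℝ satisfy |y₁| < ct. Set b = √(c²t² − y₁²). Then ∫_{−b}^{b} λ e^{(λ/c)√(c²t² − y₁² − y₂²)} / ( 2πc (e^{λt} − 1) √(c²t² − y₁² − y₂²) ) dy₂ = (λ / (2c(e^{λt} − 1))) · Σ_{k=0}^∞ ( (λ/(2c)) √(c²t² − y₁²) )^k / ( Γ(k/2 + 1) )². -/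
/-! With `b = √(c²t² - y₁²)`, `a = λ/c` and `s = √(b² - y₂²)`, the integrand is a constant
times `exp (a s) / s = Σ aᵏ/k! · (b² - y₂²)^((k-1)/2)`. Each term is a Beta integral,
`∫_{-b}^{b} (b² - y²)^((k-1)/2) dy = (2b)ᵏ Γ((k+1)/2)² / k!`, which Legendre's duplication formula
turns into `π k! (b/2)ᵏ / Γ(k/2+1)²`. Summing term by term is legitimate because
`Γ(k/2+1)² ≥ k!/2ᵏ`, so the integrals of the absolute values are dominated by an exponential
series. -/

open Real Nat MeasureTheory Set

lemma Gamma_half_mul_Gamma_half_add_one (k : ℕ) :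
    Gamma ((k + 1) / 2) * Gamma (k / 2 + 1) = √π * k ! / 2 ^ k := by
  have h := Gamma_mul_Gamma_add_half ((k + 1) / 2)
  rw [show ((k : ℝ) + 1) / 2 + 1 / 2 = k / 2 + 1 by ring,
    show 2 * (((k : ℝ) + 1) / 2) = k + 1 by ring, Gamma_nat_eq_factorial,
    show 1 - ((k : ℝ) + 1) = -k by ring, rpow_neg zero_le_two, rpow_natCast] at h
  rw [h]
  field_simp

lemma Gamma_half_le_sqrt_pi_mul_Gamma_half_add_one (k : ℕ) :
    Gamma ((k + 1) / 2) ≤ √π * Gamma (k / 2 + 1) := by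
  induction k using Nat.twoStepInduction with
  | zero => norm_num [Gamma_one_half_eq]
  | one =>
    rw [show ((1 : ℕ) + 1 : ℝ) / 2 = 1 by norm_num,
      show ((1 : ℕ) : ℝ) / 2 + 1 = 1 / 2 + 1 by norm_num, Gamma_add_one one_half_pos.ne',
      Gamma_one_half_eq, Gamma_one]
    nlinarith [sq_sqrt pi_pos.le, pi_gt_three]
  | more k ih _ =>
    have hk : (0 : ℝ) ≤ k := k.cast_nonneg
    push_cast
    rw [show ((k : ℝ) + 2 + 1) / 2 = (k + 1) / 2 + 1 by ring,
      show ((k : ℝ) + 2) / 2 + 1 = (k / 2 + 1) + 1 by ring,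
      Gamma_add_one (by positivity), Gamma_add_one (by positivity)]
    nlinarith [sqrt_nonneg π, Gamma_pos_of_pos (by positivity : (0 : ℝ) < k / 2 + 1)]

lemma factorial_div_two_pow_le_Gamma_sq (k : ℕ) :
    (k ! / 2 ^ k : ℝ) ≤ Gamma (k / 2 + 1) ^ 2 := by
  have hG : 0 < Gamma (k / 2 + 1) := Gamma_pos_of_pos (by positivity)
  have hdup := Gamma_half_mul_Gamma_half_add_one k
  have hle := Gamma_half_le_sqrt_pi_mul_Gamma_half_add_one k
  have hπ : 0 < √π := sqrt_pos.mpr pi_pos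
  rw [← mul_le_mul_iff_right₀ hπ, mul_div_assoc']
  nlinarith

lemma summable_pow_div_Gamma_half_add_one_sq (x : ℝ) :
    Summable fun k : ℕ => x ^ k / Gamma (k / 2 + 1) ^ 2 := by
  refine (summable_pow_div_factorial (2 * |x|)).of_norm_bounded fun k => ?_
  calc ‖x ^ k / Gamma (k / 2 + 1) ^ 2‖ = |x| ^ k / Gamma (k / 2 + 1) ^ 2 := by
        rw [norm_div, norm_pow, norm_pow, Real.norm_eq_abs, Real.norm_eq_abs, sq_abs]
    _ ≤ |x| ^ k / (k ! / 2 ^ k) := by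
        gcongr; exact factorial_div_two_pow_le_Gamma_sq k
    _ = (2 * |x|) ^ k / k ! := by rw [mul_pow]; field_simp

lemma integral_rpow_mul_one_sub_rpow {p q : ℝ} (hp : -1 < p) (hq : -1 < q) :
    ∫ x in (0 : ℝ)..1, x ^ p * (1 - x) ^ q
      = Gamma (p + 1) * Gamma (q + 1) / Gamma (p + q + 2) := by
  have hbeta := Complex.Gamma_mul_Gamma_eq_betaIntegral (s := ((p + 1 : ℝ) : ℂ))
    (t := ((q + 1 : ℝ) : ℂ)) (by simp; linarith) (by simp; linarith)
  have hcpow : Complex.betaIntegral ((p + 1 : ℝ) : ℂ) ((q + 1 : ℝ) : ℂ)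
      = ((∫ x in (0 : ℝ)..1, x ^ p * (1 - x) ^ q : ℝ) : ℂ) := by
    rw [Complex.betaIntegral, ← intervalIntegral.integral_ofReal]
    refine intervalIntegral.integral_congr fun x hx => ?_
    rw [uIcc_of_le zero_le_one] at hx
    simp only [Complex.ofReal_add, Complex.ofReal_one, add_sub_cancel_right]
    push_cast [Complex.ofReal_cpow hx.1, Complex.ofReal_cpow (sub_nonneg.mpr hx.2)]
    rfl
  rw [hcpow, ← Complex.ofReal_add, Complex.Gamma_ofReal, Complex.Gamma_ofReal,
    Complex.Gamma_ofReal, ← Complex.ofReal_mul, ← Complex.ofReal_mul, Complex.ofReal_inj,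
    show p + 1 + (q + 1) = p + q + 2 by ring] at hbeta
  rw [hbeta, mul_div_cancel_left₀ _ (Gamma_pos_of_pos (by linarith)).ne']

lemma integral_sub_rpow_mul_sub_rpow {a b p q : ℝ} (hab : a < b) (hp : -1 < p) (hq : -1 < q) :
    ∫ x in a..b, (x - a) ^ p * (b - x) ^ q
      = (b - a) ^ (p + q + 1) * (Gamma (p + 1) * Gamma (q + 1) / Gamma (p + q + 2)) := by
  have hba : 0 < b - a := sub_pos.mpr hab
  have hsubst := intervalIntegral.integral_comp_mul_add (fun x => (x - a) ^ p * (b - x) ^ q)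
    hba.ne' a (a := 0) (b := 1)
  rw [mul_zero, zero_add, mul_one, sub_add_cancel, smul_eq_mul] at hsubst
  have hscale : ∫ u in (0 : ℝ)..1, ((b - a) * u + a - a) ^ p * (b - ((b - a) * u + a)) ^ q
      = (b - a) ^ (p + q) * ∫ u in (0 : ℝ)..1, u ^ p * (1 - u) ^ q := by
    rw [← intervalIntegral.integral_const_mul]
    refine intervalIntegral.integral_congr fun u hu => ?_
    rw [uIcc_of_le zero_le_one] at hu
    rw [add_sub_cancel_right, show b - ((b - a) * u + a) = (b - a) * (1 - u) by ring,
      mul_rpow hba.le hu.1, mul_rpow hba.le (sub_nonneg.mpr hu.2), rpow_add hba]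
    ring
  rw [hscale, integral_rpow_mul_one_sub_rpow hp hq, eq_inv_mul_iff_mul_eq₀ hba.ne'] at hsubst
  rw [← hsubst, rpow_add_one hba.ne']
  ring

lemma integral_sq_sub_sq_rpow {b p : ℝ} (hb : 0 < b) (hp : -1 < p) :
    ∫ y in -b..b, (b ^ 2 - y ^ 2) ^ p
      = (2 * b) ^ (2 * p + 1) * (Gamma (p + 1) ^ 2 / Gamma (2 * p + 2)) := by
  have h := integral_sub_rpow_mul_sub_rpow (neg_lt_self hb) hp hp
  rw [sub_neg_eq_add, ← two_mul, show p + p + 1 = 2 * p + 1 by ring,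
    show p + p + 2 = 2 * p + 2 by ring, ← sq] at h
  rw [← h]
  refine intervalIntegral.integral_congr fun y hy => ?_
  rw [uIcc_of_le (neg_le_self hb.le)] at hy
  rw [← mul_rpow (by linarith [hy.1]) (by linarith [hy.2])]
  ring_nf

lemma integral_sq_sub_sq_rpow_half_pred {b : ℝ} (hb : 0 < b) (k : ℕ) :
    ∫ y in -b..b, (b ^ 2 - y ^ 2) ^ (((k : ℝ) - 1) / 2)
      = π * k ! * (b / 2) ^ k / Gamma (k / 2 + 1) ^ 2 := by
  have hk : -1 < ((k : ℝ) - 1) / 2 := by linarith [k.cast_nonneg (α := ℝ)]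
  have hG : 0 < Gamma (k / 2 + 1) := Gamma_pos_of_pos (by positivity)
  have hdup : Gamma ((k + 1) / 2) = √π * k ! / 2 ^ k / Gamma (k / 2 + 1) := by
    rw [← Gamma_half_mul_Gamma_half_add_one, mul_div_cancel_right₀ _ hG.ne']
  rw [integral_sq_sub_sq_rpow hb hk, show 2 * (((k : ℝ) - 1) / 2) + 1 = k by ring,
    show ((k : ℝ) - 1) / 2 + 1 = (k + 1) / 2 by ring,
    show 2 * (((k : ℝ) - 1) / 2) + 2 = k + 1 by ring, Gamma_nat_eq_factorial, rpow_natCast,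
    hdup, div_pow b, div_pow, div_pow, mul_pow _ (k ! : ℝ), sq_sqrt pi_pos.le]
  field_simp
  ring

lemma hasSum_pow_div_factorial_mul_rpow (a : ℝ) {u : ℝ} (hu : 0 < u) :
    HasSum (fun k : ℕ => a ^ k / k ! * u ^ (((k : ℝ) - 1) / 2)) (exp (a * √u) / √u) := by
  have hsqrt : 0 < √u := sqrt_pos.mpr hu
  have h := (NormedSpace.expSeries_div_hasSum_exp (a * √u)).div_const √u
  rw [← exp_eq_exp_ℝ] at h
  have hterm : ∀ k : ℕ, a ^ k / k ! * u ^ (((k : ℝ) - 1) / 2) = (a * √u) ^ k / k ! / √u := by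
    intro k
    rw [show ((k : ℝ) - 1) / 2 = 1 / 2 * ((k : ℝ) - 1) by ring, rpow_mul hu.le, ← sqrt_eq_rpow,
      rpow_sub_one hsqrt.ne', rpow_natCast, mul_pow]
    ring
  simpa only [hterm] using h

lemma hasSum_integral_exp_mul_sqrt_div_sqrt (a : ℝ) {b : ℝ} (hb : 0 < b) :
    HasSum (fun k : ℕ => π * (a * b / 2) ^ k / Gamma (k / 2 + 1) ^ 2)
      (∫ y in -b..b, exp (a * √(b ^ 2 - y ^ 2)) / √(b ^ 2 - y ^ 2)) := by
  have hb' : -b ≤ b := neg_le_self hb.le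
  let F (r : ℝ) (k : ℕ) (y : ℝ) : ℝ := r ^ k / k ! * (b ^ 2 - y ^ 2) ^ (((k : ℝ) - 1) / 2)
  have hF_int (k : ℕ) : IntegrableOn (F a k) (Ioo (-b) b) := by
    -- a nonzero interval integral forces integrability
    have hpos : 0 < ∫ y in -b..b, (b ^ 2 - y ^ 2) ^ (((k : ℝ) - 1) / 2) := by
      rw [integral_sq_sub_sq_rpow_half_pred hb]
      have := Gamma_pos_of_pos (by positivity : (0 : ℝ) < k / 2 + 1)
      positivity
    exact (intervalIntegrable_iff_integrableOn_Ioo_of_le hb').mp <|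
      (intervalIntegral.intervalIntegrable_of_integral_ne_zero hpos.ne').const_mul _
  have hF_integral (r : ℝ) (k : ℕ) :
      ∫ y in Ioo (-b) b, F r k y = π * (r * b / 2) ^ k / Gamma (k / 2 + 1) ^ 2 := by
    rw [← integral_Ioc_eq_integral_Ioo, ← intervalIntegral.integral_of_le hb',
      intervalIntegral.integral_const_mul, integral_sq_sub_sq_rpow_half_pred hb]
    field_simp
    ring
  have hF_norm (k : ℕ) : ∫ y in Ioo (-b) b, ‖F a k y‖ = ∫ y in Ioo (-b) b, F |a| k y := by
    refine setIntegral_congr_fun measurableSet_Ioo fun y hy => ?_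
    have : 0 < b ^ 2 - y ^ 2 := by nlinarith [hy.1, hy.2]
    simp only [F, norm_mul, norm_div, norm_pow, Real.norm_eq_abs, Nat.abs_cast,
      abs_of_pos (rpow_pos_of_pos this _)]
  have hsum := hasSum_integral_of_summable_integral_norm hF_int <| by
    simp_rw [hF_norm, hF_integral, mul_div_assoc]
    exact (summable_pow_div_Gamma_half_add_one_sq _).mul_left π
  rw [intervalIntegral.integral_of_le hb', integral_Ioc_eq_integral_Ioo]
  rw [setIntegral_congr_fun measurableSet_Ioo fun y hy =>
    (hasSum_pow_div_factorial_mul_rpow a (by nlinarith [hy.1, hy.2])).tsum_eq.symm]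
  simpa only [hF_integral] using hsum

theorem statement19_general (lam c t y₁ : ℝ) (hy : |y₁| < c * t) :
    (∫ y₂ in (-Real.sqrt (c ^ 2 * t ^ 2 - y₁ ^ 2))..
        (Real.sqrt (c ^ 2 * t ^ 2 - y₁ ^ 2)),
      lam * Real.exp (lam / c * Real.sqrt (c ^ 2 * t ^ 2 - y₁ ^ 2 - y₂ ^ 2)) /
        (2 * π * c * (Real.exp (lam * t) - 1) *
          Real.sqrt (c ^ 2 * t ^ 2 - y₁ ^ 2 - y₂ ^ 2)))
    = lam / (2 * c * (Real.exp (lam * t) - 1)) *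
        ∑' k : ℕ,
          (lam / (2 * c) * Real.sqrt (c ^ 2 * t ^ 2 - y₁ ^ 2)) ^ k /
            (Real.Gamma ((k : ℝ) / 2 + 1)) ^ 2 := by
  have hb2 : 0 < c ^ 2 * t ^ 2 - y₁ ^ 2 := by
    nlinarith [sq_abs y₁, abs_nonneg y₁]
  have hsub (y₂ : ℝ) :
      c ^ 2 * t ^ 2 - y₁ ^ 2 - y₂ ^ 2 = √(c ^ 2 * t ^ 2 - y₁ ^ 2) ^ 2 - y₂ ^ 2 := by
    rw [sq_sqrt hb2.le]
  have hb := sqrt_pos.mpr hb2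
  generalize √(c ^ 2 * t ^ 2 - y₁ ^ 2) = b at hb hsub ⊢
  simp_rw [hsub, mul_div_mul_comm lam]
  rw [intervalIntegral.integral_const_mul,
    ← (hasSum_integral_exp_mul_sqrt_div_sqrt (lam / c) hb).tsum_eq]
  simp_rw [mul_div_assoc π, tsum_mul_left, show lam / c * b / 2 = lam / (2 * c) * b by ring]
  field_simp

/-- the marginal along `y₂` of the planar projection of `Y₃(t)`:
for `|y₁| < ct`, with `b = √(c²t² - y₁²)`,
`∫_{-b}^{b} λ e^{(λ/c)√(c²t²-y₁²-y₂²)} / (2πc(e^{λt}-1)√(c²t²-y₁²-y₂²)) dy₂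
  = (λ/(2c(e^{λt}-1))) Σ_{k=0}^∞ ((λ/(2c))√(c²t²-y₁²))^k / (Γ(k/2+1))²`. -/
theorem statement19 (lam c t y₁ : ℝ) (hlam : 0 < lam) (hc : 0 < c) (ht : 0 < t)
    (hy : |y₁| < c * t) :
    (∫ y₂ in (-Real.sqrt (c ^ 2 * t ^ 2 - y₁ ^ 2))..
        (Real.sqrt (c ^ 2 * t ^ 2 - y₁ ^ 2)),
      lam * Real.exp (lam / c * Real.sqrt (c ^ 2 * t ^ 2 - y₁ ^ 2 - y₂ ^ 2)) /
        (2 * π * c * (Real.exp (lam * t) - 1) *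
          Real.sqrt (c ^ 2 * t ^ 2 - y₁ ^ 2 - y₂ ^ 2)))
    = lam / (2 * c * (Real.exp (lam * t) - 1)) *
        ∑' k : ℕ,
          (lam / (2 * c) * Real.sqrt (c ^ 2 * t ^ 2 - y₁ ^ 2)) ^ k /
            (Real.Gamma ((k : ℝ) / 2 + 1)) ^ 2 :=
  statement19_general lam c t y₁ hy
end
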